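/- For every job j ∈ 𝒥 and every interval endpoint t ∈ 𝒯̂, the rounded cost satisfies f_j(t) ≤ f'_j(t) ≤ (1+ε) · f_j(t). -/

import Mathlib

open Finset
open scoped Classical

/-- `t` belongs to class `k` of the cost function `g`: class `0` is `{t : g t = 0}` and,
for `k ≥ 1`, class `k` is `{t : (1+ε)^(k−1) ≤ g t < (1+ε)^k}`. -/
def InClass (ε : ℝ) (g : ℕ → ℕ) (k t : ℕ) : Prop :=
  if k = 0 then g t = 0
  else (1 + ε) ^ (k - 1) ≤ (g t : ℝ) ∧ (g t : ℝ) < (1 + ε) ^ k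

/-- The set `𝒯̂_j` of left endpoints: the times `t ∈ 𝒯 = {1,…,T}` that are the minimum
element of some (nonempty) class of `g`. -/
noncomputable def leftEnds (T : ℕ) (ε : ℝ) (g : ℕ → ℕ) : Finset ℕ :=
  (Icc 1 T).filter fun t => ∃ k : ℕ,
    InClass ε g k t ∧ ∀ s ∈ Icc 1 T, InClass ε g k s → t ≤ s

/-- The set of interval endpoints `𝒯̂ = (∪_{j∈𝒥} 𝒯̂_j) ∪ {1}`. -/
noncomputable def That {n : ℕ} (T : ℕ) (ε : ℝ) (f : Fin n → ℕ → ℕ) : Finset ℕ :=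
  (univ.biUnion fun j => leftEnds T ε (f j)) ∪ {1}

/-- The rounded cost function `f'`: writing `𝒯̂ = {t_1 < t_2 < ⋯ < t_τ}`, we set
`f'_j(t_i) = f_j(t_{i+1} − 1)` for `i < τ` and `f'_j(t_τ) = f_j(T)`.  (For `t ∈ 𝒯̂`, the
`min` below is the next endpoint of `𝒯̂` after `t`, or `T + 1` if there is none.) -/
noncomputable def fround {n : ℕ} (T : ℕ) (ε : ℝ) (f : Fin n → ℕ → ℕ)
    (j : Fin n) (t : ℕ) : ℕ :=
  f j ((((That T ε f).filter fun s => t < s).min.untopD (T + 1)) - 1)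

/-!
Let `s` be the last time before the endpoint of `𝒯̂` following `t` (or `T`). The minimum of
the class of `f_j(s)` is a left endpoint of job `j` that is at most `s`, hence at most `t`.
By monotonicity `f_j(t)` lies between two values of that class, so `t` and `s` lie in the
same class, and two costs in one class differ by a factor less than `1 + ε`.
-/

theorem exists_inClass {ε : ℝ} (hε : 0 < ε) (g : ℕ → ℕ) (t : ℕ) : ∃ k, InClass ε g k t := by
  by_cases hg : g t = 0
  · exact ⟨0, by simp [InClass, hg]⟩
  · obtain ⟨k, hlow, hhigh⟩ := exists_nat_pow_near (x := (g t : ℝ)) (y := 1 + ε)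
      (by exact_mod_cast Nat.one_le_iff_ne_zero.mpr hg) (by linarith)
    exact ⟨k + 1, by simp [InClass, hlow, hhigh]⟩

section Classes

variable {ε : ℝ} {g : ℕ → ℕ}

theorem InClass.of_le_of_le {k a b c : ℕ} (ha : InClass ε g k a) (hb : InClass ε g k b)
    (hac : g a ≤ g c) (hcb : g c ≤ g b) : InClass ε g k c := by
  unfold InClass at *
  split_ifs at * with hk
  · omega
  · have hac' : (g a : ℝ) ≤ g c := by exact_mod_cast hac
    have hcb' : (g c : ℝ) ≤ g b := by exact_mod_cast hcb
    exact ⟨ha.1.trans hac', hcb'.trans_lt hb.2⟩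

theorem InClass.le_one_add_mul (hε : 0 ≤ ε) {k a b : ℕ} (ha : InClass ε g k a)
    (hb : InClass ε g k b) : (g b : ℝ) ≤ (1 + ε) * g a := by
  unfold InClass at *
  split_ifs at * with hk
  · simp [ha, hb]
  · calc (g b : ℝ) ≤ (1 + ε) ^ (k - 1 + 1) := by rw [Nat.sub_add_cancel (by omega)]; exact hb.2.le
      _ = (1 + ε) * (1 + ε) ^ (k - 1) := pow_succ' _ _
      _ ≤ (1 + ε) * g a := by gcongr; exact ha.1

theorem exists_mem_leftEnds_le_inClass {T k t : ℕ} (ht : t ∈ Icc 1 T)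
    (hk : InClass ε g k t) : ∃ m ∈ leftEnds T ε g, m ≤ t ∧ InClass ε g k m := by
  have hne : ((Icc 1 T).filter (InClass ε g k)).Nonempty := ⟨t, mem_filter.2 ⟨ht, hk⟩⟩
  set m := ((Icc 1 T).filter (InClass ε g k)).min' hne
  obtain ⟨hmIcc, hmk⟩ := mem_filter.1 (min'_mem _ hne)
  have hmin : ∀ s ∈ Icc 1 T, InClass ε g k s → m ≤ s :=
    fun s hs hsk => min'_le _ s (mem_filter.2 ⟨hs, hsk⟩)
  exact ⟨m, mem_filter.2 ⟨hmIcc, k, hmk, hmin⟩, hmin t ht hk, hmk⟩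

end Classes

section Endpoints

variable {n : ℕ} {T : ℕ} {ε : ℝ} {f : Fin n → ℕ → ℕ}

theorem mem_That_of_mem_leftEnds {j : Fin n} {m : ℕ} (hm : m ∈ leftEnds T ε (f j)) :
    m ∈ That T ε f :=
  mem_union_left _ (mem_biUnion.2 ⟨j, mem_univ j, hm⟩)

theorem That_subset_Icc (hT : 1 ≤ T) : That T ε f ⊆ Icc 1 T := by
  intro m hm
  rcases mem_union.1 hm with hm | hm
  · obtain ⟨_, _, hm⟩ := mem_biUnion.1 hm
    exact (mem_filter.1 hm).1
  · rw [mem_singleton.1 hm, mem_Icc]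
    exact ⟨le_rfl, hT⟩

end Endpoints

section BlockEnd

noncomputable def blockEnd (S : Finset ℕ) (T t : ℕ) : ℕ :=
  ((S.filter fun s => t < s).min.untopD (T + 1)) - 1

theorem fround_eq_blockEnd {n : ℕ} (T : ℕ) (ε : ℝ) (f : Fin n → ℕ → ℕ) (j : Fin n) (t : ℕ) :
    fround T ε f j t = f j (blockEnd (That T ε f) T t) :=
  rfl

variable {S : Finset ℕ} {T t : ℕ}

theorem blockEnd_lt {m : ℕ} (hm : m ∈ S) (htm : t < m) : blockEnd S T t < m := by
  have hmF : m ∈ S.filter fun s => t < s := mem_filter.2 ⟨hm, htm⟩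
  obtain ⟨a, ha⟩ := Finset.min_of_mem hmF
  have ham : a ≤ m := WithTop.coe_le_coe.1 (ha ▸ min_le hmF)
  have hta : t < a := (mem_filter.1 (mem_of_min ha)).2
  rw [blockEnd, ha, WithTop.untopD_coe]
  omega

theorem le_blockEnd (ht : t ≤ T) : t ≤ blockEnd S T t := by
  unfold blockEnd
  generalize h : (S.filter fun s => t < s).min = x
  cases x with
  | top => simp only [WithTop.untopD_top]; omega
  | coe a =>
    have := (mem_filter.1 (mem_of_min h)).2
    simp only [WithTop.untopD_coe]; omega

theorem blockEnd_le (hS : ∀ m ∈ S, m ≤ T) : blockEnd S T t ≤ T := by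
  unfold blockEnd
  generalize h : (S.filter fun s => t < s).min = x
  cases x with
  | top => simp only [WithTop.untopD_top]; omega
  | coe a =>
    have := hS a (mem_filter.1 (mem_of_min h)).1
    simp only [WithTop.untopD_coe]; omega

end BlockEnd

theorem stmt_14_general {n : ℕ} (ε : ℝ) (hε : 0 < ε)
    (p : Fin n → ℕ) (hp : ∀ j, 0 < p j)
    (T : ℕ) (hT : T = ∑ j, p j)
    (f : Fin n → ℕ → ℕ)
    (hfmono : ∀ j, ∀ s t : ℕ, s ≤ t → t ≤ T → f j s ≤ f j t) :
    ∀ j : Fin n, ∀ t ∈ That T ε f,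
      f j t ≤ fround T ε f j t ∧
      (fround T ε f j t : ℝ) ≤ (1 + ε) * (f j t : ℝ) := by
  intro j t ht
  have hT1 : 1 ≤ T := hT ▸ (hp j).trans_le (single_le_sum (fun i _ => (hp i).le) (mem_univ j))
  have hIcc := That_subset_Icc (f := f) (ε := ε) hT1
  obtain ⟨ht1, htT⟩ := mem_Icc.1 (hIcc ht)
  rw [fround_eq_blockEnd]
  set s := blockEnd (That T ε f) T t
  have hts : t ≤ s := le_blockEnd htT
  have hsT : s ≤ T := blockEnd_le fun m hm => (mem_Icc.1 (hIcc hm)).2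
  obtain ⟨k, hsk⟩ := exists_inClass hε (f j) s
  obtain ⟨m, hm, hms, hmk⟩ :=
    exists_mem_leftEnds_le_inClass (mem_Icc.2 ⟨by omega, hsT⟩) hsk
  have hmt : m ≤ t := not_lt.1 fun htm => (blockEnd_lt (mem_That_of_mem_leftEnds hm) htm).not_ge hms
  have htk : InClass ε (f j) k t :=
    hmk.of_le_of_le hsk (hfmono j m t hmt htT) (hfmono j t s hts hsT)
  exact ⟨hfmono j t s hts hsT, htk.le_one_add_mul hε.le hsk⟩

/-- For every job `j ∈ 𝒥` and every interval endpoint `t ∈ 𝒯̂`, the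
rounded cost satisfies `f_j(t) ≤ f'_j(t) ≤ (1+ε)·f_j(t)`. -/
theorem stmt_14 {n : ℕ} (ε : ℝ) (hε : 0 < ε)
    (p : Fin n → ℕ) (hp : ∀ j, 0 < p j)
    (T : ℕ) (hT : T = ∑ j, p j)
    (f : Fin n → ℕ → ℕ) (hf0 : ∀ j, f j 0 = 0)
    (hfmono : ∀ j, ∀ s t : ℕ, s ≤ t → t ≤ T → f j s ≤ f j t) :
    ∀ j : Fin n, ∀ t ∈ That T ε f,
      f j t ≤ fround T ε f j t ∧
      (fround T ε f j t : ℝ) ≤ (1 + ε) * (f j t : ℝ) :=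
  stmt_14_general ε hε p hp T hT f hfmono
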